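/- arXiv:1209.4879 — 2 statements merged into one kernel-verified Lean document; each statement's English description precedes it below -/
import Mathlib

section
/- For all natural numbers d ≥ 3 and n ≥ d + 1 there exists a (d+1)-uniform hypergraph H on n vertices that admits a linear embedding into ℝ^d and whose strong chromatic number satisfies χˢ(H) ≥ ⌊√(n − d + 3)⌋ + d − 3. (In the paper's notation: χˢ_{d,d+1}(n) ≥ ⌊√(n−d+3)⌋ + d − 3.) -/
/-- A hypergraph on a vertex type `V`: a finite set of edges, each a finite set of vertices. -/
structure FinsetHypergraph (V : Type) where
  edges : Finset (Finset V)

namespace FinsetHypergraph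

variable {V : Type}

/-- `H` is `k`-uniform if every edge has exactly `k` vertices. -/
def IsUniform (H : FinsetHypergraph V) (k : ℕ) : Prop :=
  ∀ e ∈ H.edges, e.card = k

/-- A (linear) embedding of the `k`-uniform hypergraph `H` into `ℝ^d`:
a map `φ : V → ℝ^d` such that the affine span of every embedded edge has
dimension `k - 1`, and for any two edges the convex hulls intersect exactly in
the convex hull of the image of their common vertices. -/
def HasLinearEmbedding [DecidableEq V] (H : FinsetHypergraph V) (k d : ℕ) : Prop :=
  ∃ φ : V → EuclideanSpace ℝ (Fin d),
    (∀ e ∈ H.edges,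
      Module.finrank ℝ (affineSpan ℝ (φ '' (e : Set V))).direction = k - 1) ∧
    (∀ e₁ ∈ H.edges, ∀ e₂ ∈ H.edges,
      convexHull ℝ (φ '' ((e₁ ∩ e₂ : Finset V) : Set V)) =
        convexHull ℝ (φ '' (e₁ : Set V)) ∩ convexHull ℝ (φ '' (e₂ : Set V)))

/-- A strong `c`-coloring: a coloring of the vertices injective on every edge. -/
def StrongColorable (H : FinsetHypergraph V) (c : ℕ) : Prop :=
  ∃ κ : V → Fin c, ∀ e ∈ H.edges, Set.InjOn κ (e : Set V)

/-- The strong chromatic number: least `c` admitting a strong `c`-coloring. -/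
noncomputable def strongChromaticNumber (H : FinsetHypergraph V) : ℕ :=
  sInf {c | H.StrongColorable c}

/-- A weak `c`-coloring: a coloring of the vertices such that no edge is monochromatic. -/
def WeakColorable (H : FinsetHypergraph V) (c : ℕ) : Prop :=
  ∃ κ : V → Fin c, ∀ e ∈ H.edges, ∃ u ∈ e, ∃ v ∈ e, κ u ≠ κ v

/-- The weak chromatic number: least `c` admitting a weak `c`-coloring. -/
noncomputable def weakChromaticNumber (H : FinsetHypergraph V) : ℕ :=
  sInf {c | H.WeakColorable c}

end FinsetHypergraph

/-!
Write `d = 3 + k` and `m = ⌊√(n - d + 3)⌋`. Put `k` apexes at the last `k` unit vectors of `ℝ^d`,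
and the vertices `(i, j) ∈ Fin m × Fin m` on the moment curve `t ↦ (t, t², t³, 0, …, 0)`: the
diagonal vertex `(i, i)` at parameter `i`, and `(i, j)` with `i ≠ j` at `i + 1/(4(j - i))`, just
next to `i` on the side of `j`. For `s < t` the edge `e(s, t)` consists of the apexes and the four
vertices `{s, t}²`. This uses `k + m² ≤ n` vertices (the others stay isolated), and any two of
the `k + m` apexes and diagonal vertices lie in a common edge, so they need distinct colours.

The affine functions that vanish at the apexes restrict to arbitrary cubics on the curve. Such a
function vanishing at three of the four curve points of an edge shows that the `d + 1` points of
the edge are affinely independent. For two edges, a cubic whose roots are interleaved with the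
eight parameters of their curve points is `≤ 0` on one edge, `≥ 0` on the other and vanishes only
at common vertices, so the convex hulls of the two edges meet in that of their intersection.
-/

open Polynomial Finset

namespace FinsetHypergraph

variable {V W : Type} {H : FinsetHypergraph V}

def map (H : FinsetHypergraph V) (f : V ↪ W) : FinsetHypergraph W :=
  ⟨H.edges.map (Finset.mapEmbedding f).toEmbedding⟩

theorem mem_map_edges {f : V ↪ W} {e : Finset W} :
    e ∈ (H.map f).edges ↔ ∃ e' ∈ H.edges, e'.map f = e := by
  simp [map]

theorem IsUniform.map {k : ℕ} (hH : H.IsUniform k) (f : V ↪ W) : (H.map f).IsUniform k := by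
  simp only [IsUniform, mem_map_edges]
  rintro _ ⟨e, he, rfl⟩
  rw [card_map, hH e he]

theorem HasLinearEmbedding.map [DecidableEq V] [DecidableEq W] {k d : ℕ}
    (hH : H.HasLinearEmbedding k d) (f : V ↪ W) : (H.map f).HasLinearEmbedding k d := by
  obtain ⟨φ, hrank, hhull⟩ := hH
  have himage (e : Finset V) : Function.extend f φ 0 '' (e.map f : Set W) = φ '' e := by
    rw [coe_map, Set.image_image]
    exact Set.image_congr fun v _ => f.injective.extend_apply φ 0 v
  refine ⟨Function.extend f φ 0, ?_, ?_⟩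
  · simp only [mem_map_edges]
    rintro _ ⟨e, he, rfl⟩
    rw [himage, hrank e he]
  · simp only [mem_map_edges]
    rintro _ ⟨e₁, he₁, rfl⟩ _ ⟨e₂, he₂, rfl⟩
    rw [← map_inter, himage, himage, himage, hhull e₁ he₁ e₂ he₂]

theorem StrongColorable.of_map {f : V ↪ W} {c : ℕ} (h : (H.map f).StrongColorable c) :
    H.StrongColorable c := by
  obtain ⟨κ, hκ⟩ := h
  refine ⟨κ ∘ f, fun e he => ?_⟩
  have := hκ (e.map f) (mem_map_edges.2 ⟨e, he, rfl⟩)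
  rw [coe_map] at this
  exact this.comp (Set.injOn_of_injective f.injective) (Set.mapsTo_image f e)

theorem strongColorable_natCard [Finite V] (H : FinsetHypergraph V) :
    H.StrongColorable (Nat.card V) :=
  ⟨Finite.equivFin V, fun _ _ => (Finite.equivFin V).injective.injOn⟩

theorem strongChromaticNumber_le_map [Finite W] (f : V ↪ W) :
    H.strongChromaticNumber ≤ (H.map f).strongChromaticNumber :=
  le_csInf ⟨_, strongColorable_natCard _⟩ fun _ hc => Nat.sInf_le hc.of_map

theorem card_le_strongChromaticNumber [Finite V] (S : Finset V)
    (hS : ∀ u ∈ S, ∀ v ∈ S, u ≠ v → ∃ e ∈ H.edges, u ∈ e ∧ v ∈ e) :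
    S.card ≤ H.strongChromaticNumber := by
  refine le_csInf ⟨_, strongColorable_natCard H⟩ fun c ⟨κ, hκ⟩ => ?_
  have hinj : Set.InjOn κ S := fun u hu v hv huv => by
    by_contra hne
    obtain ⟨e, he, hue, hve⟩ := hS u hu v hv hne
    exact hne (hκ e he hue hve huv)
  simpa using card_le_card_of_injOn κ (fun _ _ => mem_univ _) hinj

end FinsetHypergraph

section ConvexGeometry

variable {E : Type*} [AddCommGroup E]

theorem convexHull_inter_setOf_eq_zero_subset [Module ℝ E] {s : Set E} {f : E →ᵃ[ℝ] ℝ}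
    (hf : ∀ x ∈ s, f x ≤ 0) :
    convexHull ℝ s ∩ {x | f x = 0} ⊆ convexHull ℝ (s ∩ {x | f x = 0}) := by
  set F := convexHull ℝ (s ∩ {x | f x = 0})
  suffices convexHull ℝ s ⊆ {x | f x ≤ 0 ∧ (f x = 0 → x ∈ F)} from
    fun x ⟨hx, hx0⟩ => (this hx).2 hx0
  refine convexHull_min (fun x hx => ⟨hf x hx, fun h => subset_convexHull ℝ _ ⟨hx, h⟩⟩) ?_
  rintro x ⟨hx, hxF⟩ y ⟨hy, hyF⟩ a b ha hb hab
  simp only [Set.mem_ofPred_eq, Convex.combo_affine_apply hab, smul_eq_mul]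
  refine ⟨by nlinarith, fun h => ?_⟩
  have hax : a * f x = 0 := by nlinarith
  have hby : b * f y = 0 := by nlinarith
  rcases ha.eq_or_lt with rfl | ha
  · obtain rfl : b = 1 := by simpa using hab
    simpa using hyF (by simpa using hby)
  rcases hb.eq_or_lt with rfl | hb
  · obtain rfl : a = 1 := by simpa using hab
    simpa using hxF (by simpa using hax)
  exact convex_convexHull ℝ _ (hxF (by simpa [ha.ne'] using hax))
    (hyF (by simpa [hb.ne'] using hby)) ha.le hb.le hab

theorem convexHull_image_inter_of_affineMap [Module ℝ E] {ι : Type*} (p : ι → E) {A B : Set ι}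
    (f : E →ᵃ[ℝ] ℝ) (hA : ∀ i ∈ A, f (p i) ≤ 0) (hB : ∀ i ∈ B, 0 ≤ f (p i))
    (hzero : ∀ i ∈ A, f (p i) = 0 → i ∈ B) :
    convexHull ℝ (p '' (A ∩ B)) = convexHull ℝ (p '' A) ∩ convexHull ℝ (p '' B) := by
  refine subset_antisymm (Set.subset_inter (convexHull_mono (Set.image_mono Set.inter_subset_left))
    (convexHull_mono (Set.image_mono Set.inter_subset_right))) ?_
  rintro x ⟨hxA, hxB⟩
  have hle : x ∈ f ⁻¹' Set.Iic 0 := convexHull_min (t := f ⁻¹' Set.Iic 0)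
    (Set.image_subset_iff.2 hA) ((convex_Iic (0 : ℝ)).affine_preimage f) hxA
  have hge : x ∈ f ⁻¹' Set.Ici 0 := convexHull_min (t := f ⁻¹' Set.Ici 0)
    (Set.image_subset_iff.2 hB) ((convex_Ici (0 : ℝ)).affine_preimage f) hxB
  refine convexHull_mono ?_ (convexHull_inter_setOf_eq_zero_subset
    (Set.forall_mem_image.2 hA) ⟨hxA, le_antisymm hle hge⟩)
  rintro _ ⟨⟨i, hi, rfl⟩, hi0⟩
  exact ⟨i, ⟨hi, hzero i hi hi0⟩, rfl⟩

theorem affineIndependent_of_forall_exists_affineMap {𝕜 ι : Type*} [Field 𝕜] [Module 𝕜 E]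
    {p : ι → E} (h : ∀ i, ∃ f : E →ᵃ[𝕜] 𝕜, f (p i) ≠ 0 ∧ ∀ j ≠ i, f (p j) = 0) :
    AffineIndependent 𝕜 p := by
  rw [affineIndependent_iff]
  intro s w hw hwp i hi
  obtain ⟨f, hfi, hfj⟩ := h i
  have hsum : ∑ j ∈ s, w j * f (p j) = 0 := by
    have hlin (j : ι) : f (p j) = f.linear (p j) + f 0 := by
      rw [← sub_eq_iff_eq_add, ← vsub_eq_sub, ← f.linearMap_vsub, vsub_eq_sub, sub_zero]
    simp only [hlin, mul_add, sum_add_distrib, ← sum_mul, hw, zero_mul, add_zero]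
    simpa [map_sum] using congrArg f.linear hwp
  rw [sum_eq_single i (fun j _ hj => by rw [hfj j hj, mul_zero]) (absurd hi)] at hsum
  exact (mul_eq_zero.1 hsum).resolve_right hfi

end ConvexGeometry

namespace MomentCurveHypergraph

variable {k m : ℕ}

/-- The junk value `(4 * 0)⁻¹ = 0` puts the diagonal vertex `(i, i)` at `i`. -/
noncomputable def param (i j : Fin m) : ℝ := i + (4 * ((j : ℝ) - i))⁻¹

@[simp] theorem param_self (i : Fin m) : param i i = i := by simp [param]

theorem cast_add_one_le {s t : Fin m} (h : s < t) : (s : ℝ) + 1 ≤ t := by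
  exact_mod_cast Fin.lt_def.1 h

theorem param_swap (s t : Fin m) : param t s = t - (4 * ((t : ℝ) - s))⁻¹ := by
  rw [param, ← neg_sub, mul_neg, inv_neg, ← sub_eq_add_neg]

theorem param_bounds {s t : Fin m} (h : s < t) :
    (s : ℝ) < param s t ∧ param s t ≤ s + 1 / 4 ∧ (t : ℝ) - 1 / 4 ≤ param t s ∧
      param t s < t := by
  have hst := cast_add_one_le h
  have hpos : 0 < (4 * ((t : ℝ) - s))⁻¹ := inv_pos.2 (by linarith)
  have hle : (4 * ((t : ℝ) - s))⁻¹ ≤ 1 / 4 := by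
    rw [one_div]
    exact inv_anti₀ (by norm_num) (by linarith)
  rw [param_swap s t, param]
  refine ⟨?_, ?_, ?_, ?_⟩ <;> linarith

theorem param_lt_param_above {s t t' : Fin m} (h : s < t) (h' : t < t') :
    param s t' < param s t := by
  have := cast_add_one_le h
  have := cast_add_one_le h'
  rw [param, param, add_lt_add_iff_left]
  exact inv_strictAnti₀ (by linarith) (by linarith)

theorem param_lt_param_below {s s' t : Fin m} (h : s < s') (h' : s' < t) :
    param t s' < param t s := by
  have := cast_add_one_le h
  have := cast_add_one_le h'
  rw [param_swap s' t, param_swap s t, sub_lt_sub_iff_left]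
  exact inv_strictAnti₀ (by linarith) (by linarith)

theorem param_injOn {s t : Fin m} (hst : s < t) :
    Set.InjOn (fun w : Fin m × Fin m => param w.1 w.2) ↑(({s, t} : Finset _) ×ˢ {s, t}) := by
  obtain ⟨a₁, a₂, b₁, b₂⟩ := param_bounds hst
  have := cast_add_one_le hst
  have := param_self s
  have := param_self t
  rintro ⟨i, j⟩ hij ⟨i', j'⟩ hij' h
  simp only [coe_product, coe_insert, coe_singleton, Set.mem_prod, Set.mem_insert_iff,
    Set.mem_singleton_iff] at hij hij' h
  obtain ⟨rfl | rfl, rfl | rfl⟩ := hij <;> obtain ⟨rfl | rfl, rfl | rfl⟩ := hij' <;>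
    first | rfl | linarith

/-- `P ×ˢ P` and `Q ×ˢ Q` are the curve vertices of two edges. -/
def Separates (q : ℝ[X]) (P Q : Finset (Fin m)) : Prop :=
  (∀ i ∈ P, ∀ j ∈ P, q.eval (param i j) < 0 ∨ (i ∈ Q ∧ j ∈ Q ∧ q.eval (param i j) = 0)) ∧
    ∀ i ∈ Q, ∀ j ∈ Q, 0 < q.eval (param i j) ∨ (i ∈ P ∧ j ∈ P ∧ q.eval (param i j) = 0)

theorem Separates.neg {q : ℝ[X]} {P Q : Finset (Fin m)} (h : Separates q P Q) :
    Separates (-q) Q P := by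
  simp only [Separates, eval_neg, neg_lt_zero, neg_pos, neg_eq_zero] at h ⊢
  exact h.symm

noncomputable def cubic (r₁ r₂ r₃ : ℝ) : ℝ[X] := (X - C r₁) * (X - C r₂) * (X - C r₃)

theorem natDegree_cubic_le (r₁ r₂ r₃ : ℝ) : (cubic r₁ r₂ r₃).natDegree ≤ 3 := by
  unfold cubic
  compute_degree!

@[simp] theorem eval_cubic (r₁ r₂ r₃ x : ℝ) :
    (cubic r₁ r₂ r₃).eval x = (x - r₁) * (x - r₂) * (x - r₃) := by
  simp [cubic]

section CubicSign

variable {x r₁ r₂ r₃ : ℝ}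

theorem eval_cubic_neg_of_lt_lt_lt (h₁ : x < r₁) (h₂ : x < r₂) (h₃ : x < r₃) :
    (cubic r₁ r₂ r₃).eval x < 0 := by
  rw [eval_cubic]
  nlinarith [mul_pos (mul_pos (sub_pos.2 h₁) (sub_pos.2 h₂)) (sub_pos.2 h₃)]

theorem eval_cubic_pos_of_gt_lt_lt (h₁ : r₁ < x) (h₂ : x < r₂) (h₃ : x < r₃) :
    0 < (cubic r₁ r₂ r₃).eval x := by
  rw [eval_cubic]
  nlinarith [mul_pos (mul_pos (sub_pos.2 h₁) (sub_pos.2 h₂)) (sub_pos.2 h₃)]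

theorem eval_cubic_neg_of_gt_gt_lt (h₁ : r₁ < x) (h₂ : r₂ < x) (h₃ : x < r₃) :
    (cubic r₁ r₂ r₃).eval x < 0 := by
  rw [eval_cubic]
  nlinarith [mul_pos (mul_pos (sub_pos.2 h₁) (sub_pos.2 h₂)) (sub_pos.2 h₃)]

theorem eval_cubic_pos_of_gt_gt_gt (h₁ : r₁ < x) (h₂ : r₂ < x) (h₃ : r₃ < x) :
    0 < (cubic r₁ r₂ r₃).eval x := by
  rw [eval_cubic]
  exact mul_pos (mul_pos (sub_pos.2 h₁) (sub_pos.2 h₂)) (sub_pos.2 h₃)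

end CubicSign

theorem exists_separates_disjoint {s t s' t' : Fin m} (hst : s < t) (hts' : t < s')
    (hst' : s' < t') : ∃ q : ℝ[X], q.natDegree ≤ 3 ∧ Separates q {s, t} {s', t'} := by
  obtain ⟨a₁, a₂, b₁, b₂⟩ := param_bounds hst
  obtain ⟨a₁', a₂', b₁', b₂'⟩ := param_bounds hst'
  have := cast_add_one_le hst
  have := cast_add_one_le hts'
  have := cast_add_one_le hst'
  -- s < param s t < param t s < t < s' < param s' t' < param t' s' < t'
  refine ⟨cubic ((t + s') / 2) ((t + s') / 2) ((t + s') / 2), natDegree_cubic_le .., ?_⟩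
  simp only [Separates, mem_insert, mem_singleton, forall_eq_or_imp, forall_eq, param_self]
  refine ⟨⟨⟨?_, ?_⟩, ?_, ?_⟩, ⟨?_, ?_⟩, ?_, ?_⟩
  · exact .inl (eval_cubic_neg_of_lt_lt_lt (by linarith) (by linarith) (by linarith))
  · exact .inl (eval_cubic_neg_of_lt_lt_lt (by linarith) (by linarith) (by linarith))
  · exact .inl (eval_cubic_neg_of_lt_lt_lt (by linarith) (by linarith) (by linarith))
  · exact .inl (eval_cubic_neg_of_lt_lt_lt (by linarith) (by linarith) (by linarith))
  · exact .inl (eval_cubic_pos_of_gt_gt_gt (by linarith) (by linarith) (by linarith))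
  · exact .inl (eval_cubic_pos_of_gt_gt_gt (by linarith) (by linarith) (by linarith))
  · exact .inl (eval_cubic_pos_of_gt_gt_gt (by linarith) (by linarith) (by linarith))
  · exact .inl (eval_cubic_pos_of_gt_gt_gt (by linarith) (by linarith) (by linarith))

theorem exists_separates_adjacent {s t t' : Fin m} (hst : s < t) (htt' : t < t') :
    ∃ q : ℝ[X], q.natDegree ≤ 3 ∧ Separates q {s, t} {t, t'} := by
  obtain ⟨a₁, a₂, b₁, b₂⟩ := param_bounds hst
  obtain ⟨a₁', a₂', b₁', b₂'⟩ := param_bounds htt'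
  have := cast_add_one_le hst
  have := cast_add_one_le htt'
  -- s < param s t < param t s < t < param t t' < param t' t < t'
  refine ⟨cubic t t t, natDegree_cubic_le .., ?_⟩
  simp only [Separates, mem_insert, mem_singleton, forall_eq_or_imp, forall_eq, param_self]
  refine ⟨⟨⟨?_, ?_⟩, ?_, ?_⟩, ⟨?_, ?_⟩, ?_, ?_⟩
  · exact .inl (eval_cubic_neg_of_lt_lt_lt (by linarith) (by linarith) (by linarith))
  · exact .inl (eval_cubic_neg_of_lt_lt_lt (by linarith) (by linarith) (by linarith))
  · exact .inl (eval_cubic_neg_of_lt_lt_lt (by linarith) (by linarith) (by linarith))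
  · simp
  · simp
  · exact .inl (eval_cubic_pos_of_gt_gt_gt (by linarith) (by linarith) (by linarith))
  · exact .inl (eval_cubic_pos_of_gt_gt_gt (by linarith) (by linarith) (by linarith))
  · exact .inl (eval_cubic_pos_of_gt_gt_gt (by linarith) (by linarith) (by linarith))

theorem exists_separates_common_left {s t t' : Fin m} (hst : s < t) (htt' : t < t') :
    ∃ q : ℝ[X], q.natDegree ≤ 3 ∧ Separates q {s, t} {s, t'} := by
  obtain ⟨a₁, a₂, b₁, b₂⟩ := param_bounds hst
  obtain ⟨a₁', a₂', b₁', b₂'⟩ := param_bounds (hst.trans htt')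
  have := param_lt_param_above hst htt'
  have := cast_add_one_le hst
  have := cast_add_one_le htt'
  -- s < param s t' < param s t < param t s < t < param t' s < t'
  refine ⟨cubic s ((param s t' + param s t) / 2) ((t + param t' s) / 2), natDegree_cubic_le .., ?_⟩
  simp only [Separates, mem_insert, mem_singleton, forall_eq_or_imp, forall_eq, param_self]
  refine ⟨⟨⟨?_, ?_⟩, ?_, ?_⟩, ⟨?_, ?_⟩, ?_, ?_⟩
  · simp
  · exact .inl (eval_cubic_neg_of_gt_gt_lt (by linarith) (by linarith) (by linarith))
  · exact .inl (eval_cubic_neg_of_gt_gt_lt (by linarith) (by linarith) (by linarith))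
  · exact .inl (eval_cubic_neg_of_gt_gt_lt (by linarith) (by linarith) (by linarith))
  · simp
  · exact .inl (eval_cubic_pos_of_gt_lt_lt (by linarith) (by linarith) (by linarith))
  · exact .inl (eval_cubic_pos_of_gt_gt_gt (by linarith) (by linarith) (by linarith))
  · exact .inl (eval_cubic_pos_of_gt_gt_gt (by linarith) (by linarith) (by linarith))

theorem exists_separates_common_right {s s' t : Fin m} (hss' : s < s') (hs't : s' < t) :
    ∃ q : ℝ[X], q.natDegree ≤ 3 ∧ Separates q {s, t} {s', t} := by
  obtain ⟨a₁, a₂, b₁, b₂⟩ := param_bounds (hss'.trans hs't)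
  obtain ⟨a₁', a₂', b₁', b₂'⟩ := param_bounds hs't
  have := param_lt_param_below hss' hs't
  have := cast_add_one_le hss'
  have := cast_add_one_le hs't
  -- s < param s t < s' < param s' t < param t s' < param t s < t
  refine ⟨cubic ((param s t + s') / 2) ((param t s' + param t s) / 2) t,
    natDegree_cubic_le .., ?_⟩
  simp only [Separates, mem_insert, mem_singleton, forall_eq_or_imp, forall_eq, param_self]
  refine ⟨⟨⟨?_, ?_⟩, ?_, ?_⟩, ⟨?_, ?_⟩, ?_, ?_⟩
  · exact .inl (eval_cubic_neg_of_lt_lt_lt (by linarith) (by linarith) (by linarith))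
  · exact .inl (eval_cubic_neg_of_lt_lt_lt (by linarith) (by linarith) (by linarith))
  · exact .inl (eval_cubic_neg_of_gt_gt_lt (by linarith) (by linarith) (by linarith))
  · simp
  · exact .inl (eval_cubic_pos_of_gt_lt_lt (by linarith) (by linarith) (by linarith))
  · exact .inl (eval_cubic_pos_of_gt_lt_lt (by linarith) (by linarith) (by linarith))
  · exact .inl (eval_cubic_pos_of_gt_lt_lt (by linarith) (by linarith) (by linarith))
  · simp

theorem exists_separates_interlaced {s s' t t' : Fin m} (hss' : s < s') (hs't : s' < t)
    (htt' : t < t') : ∃ q : ℝ[X], q.natDegree ≤ 3 ∧ Separates q {s, t} {s', t'} := by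
  obtain ⟨a₁, a₂, b₁, b₂⟩ := param_bounds (hss'.trans hs't)
  obtain ⟨a₁', a₂', b₁', b₂'⟩ := param_bounds (hs't.trans htt')
  have := cast_add_one_le hss'
  have := cast_add_one_le hs't
  have := cast_add_one_le htt'
  -- s < param s t < s' < param s' t' < param t s < t < param t' s' < t'
  refine ⟨cubic ((param s t + s') / 2) ((param s' t' + param t s) / 2) ((t + param t' s') / 2),
    natDegree_cubic_le .., ?_⟩
  simp only [Separates, mem_insert, mem_singleton, forall_eq_or_imp, forall_eq, param_self]
  refine ⟨⟨⟨?_, ?_⟩, ?_, ?_⟩, ⟨?_, ?_⟩, ?_, ?_⟩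
  · exact .inl (eval_cubic_neg_of_lt_lt_lt (by linarith) (by linarith) (by linarith))
  · exact .inl (eval_cubic_neg_of_lt_lt_lt (by linarith) (by linarith) (by linarith))
  · exact .inl (eval_cubic_neg_of_gt_gt_lt (by linarith) (by linarith) (by linarith))
  · exact .inl (eval_cubic_neg_of_gt_gt_lt (by linarith) (by linarith) (by linarith))
  · exact .inl (eval_cubic_pos_of_gt_lt_lt (by linarith) (by linarith) (by linarith))
  · exact .inl (eval_cubic_pos_of_gt_lt_lt (by linarith) (by linarith) (by linarith))
  · exact .inl (eval_cubic_pos_of_gt_gt_gt (by linarith) (by linarith) (by linarith))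
  · exact .inl (eval_cubic_pos_of_gt_gt_gt (by linarith) (by linarith) (by linarith))

theorem exists_separates_nested {s s' t t' : Fin m} (hss' : s < s') (hs't' : s' < t')
    (ht't : t' < t) : ∃ q : ℝ[X], q.natDegree ≤ 3 ∧ Separates q {s, t} {s', t'} := by
  obtain ⟨a₁, a₂, b₁, b₂⟩ := param_bounds (hss'.trans (hs't'.trans ht't))
  obtain ⟨a₁', a₂', b₁', b₂'⟩ := param_bounds hs't'
  have := cast_add_one_le hss'
  have := cast_add_one_le hs't'
  have := cast_add_one_le ht't
  -- s < param s t < s' < param s' t' < param t' s' < t' < param t s < t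
  refine ⟨cubic ((param s t + s') / 2) ((t' + param t s) / 2) (t + 1), natDegree_cubic_le .., ?_⟩
  simp only [Separates, mem_insert, mem_singleton, forall_eq_or_imp, forall_eq, param_self]
  refine ⟨⟨⟨?_, ?_⟩, ?_, ?_⟩, ⟨?_, ?_⟩, ?_, ?_⟩
  · exact .inl (eval_cubic_neg_of_lt_lt_lt (by linarith) (by linarith) (by linarith))
  · exact .inl (eval_cubic_neg_of_lt_lt_lt (by linarith) (by linarith) (by linarith))
  · exact .inl (eval_cubic_neg_of_gt_gt_lt (by linarith) (by linarith) (by linarith))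
  · exact .inl (eval_cubic_neg_of_gt_gt_lt (by linarith) (by linarith) (by linarith))
  · exact .inl (eval_cubic_pos_of_gt_lt_lt (by linarith) (by linarith) (by linarith))
  · exact .inl (eval_cubic_pos_of_gt_lt_lt (by linarith) (by linarith) (by linarith))
  · exact .inl (eval_cubic_pos_of_gt_lt_lt (by linarith) (by linarith) (by linarith))
  · exact .inl (eval_cubic_pos_of_gt_lt_lt (by linarith) (by linarith) (by linarith))

theorem exists_separates_of_toLex_lt {s t s' t' : Fin m} (hst : s < t) (hst' : s' < t')
    (h : toLex (s, t) < toLex (s', t')) :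
    ∃ q : ℝ[X], q.natDegree ≤ 3 ∧ Separates q {s, t} {s', t'} := by
  rcases Prod.Lex.toLex_lt_toLex.1 h with hss' | ⟨rfl, htt'⟩
  · rcases lt_trichotomy t s' with hts' | rfl | hs't
    · exact exists_separates_disjoint hst hts' hst'
    · exact exists_separates_adjacent hst hst'
    · rcases lt_trichotomy t t' with htt' | rfl | ht't
      · exact exists_separates_interlaced hss' hs't htt'
      · exact exists_separates_common_right hss' hs't
      · exact exists_separates_nested hss' hst' ht't
  · exact exists_separates_common_left hst htt'

theorem exists_separates {s t s' t' : Fin m} (hst : s < t) (hst' : s' < t')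
    (hne : (s, t) ≠ (s', t')) : ∃ q : ℝ[X], q.natDegree ≤ 3 ∧ Separates q {s, t} {s', t'} := by
  rcases lt_or_gt_of_ne (show toLex (s, t) ≠ toLex (s', t') from hne) with h | h
  · exact exists_separates_of_toLex_lt hst hst' h
  · obtain ⟨q, hq, hsep⟩ := exists_separates_of_toLex_lt hst' hst h
    exact ⟨-q, by rwa [natDegree_neg], hsep.neg⟩

noncomputable def curvePoint (k : ℕ) (t : ℝ) : EuclideanSpace ℝ (Fin (3 + k)) :=
  WithLp.toLp 2 (Fin.append ![t, t ^ 2, t ^ 3] 0)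

noncomputable def apex (r : Fin k) : EuclideanSpace ℝ (Fin (3 + k)) :=
  WithLp.toLp 2 (Fin.append 0 (Pi.single r 1))

/-- `x ↦ q₀ + ⟪(q₁, q₂, q₃, -q₀, …, -q₀), x⟫` with `qᵢ = q.coeff i`: it is `q` along the curve
and `q₀ - q₀ = 0` at the apexes. -/
noncomputable def curveFunctional (k : ℕ) (q : ℝ[X]) :
    EuclideanSpace ℝ (Fin (3 + k)) →ᵃ[ℝ] ℝ :=
  (innerSL ℝ (WithLp.toLp 2 (Fin.append ![q.coeff 1, q.coeff 2, q.coeff 3] fun _ => -q.coeff 0))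
    : EuclideanSpace ℝ (Fin (3 + k)) →L[ℝ] ℝ).toLinearMap.toAffineMap +
    AffineMap.const ℝ _ (q.coeff 0)

theorem curveFunctional_curvePoint {q : ℝ[X]} (hq : q.natDegree ≤ 3) (t : ℝ) :
    curveFunctional k q (curvePoint k t) = q.eval t := by
  rw [eval_eq_sum_range' (Nat.lt_succ_of_le hq)]
  simp [curveFunctional, curvePoint, PiLp.inner_apply, Fin.sum_univ_add, sum_range_succ,
    Fin.sum_univ_three]
  ring

theorem curveFunctional_apex (q : ℝ[X]) (r : Fin k) : curveFunctional k q (apex r) = 0 := by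
  simp [curveFunctional, apex, PiLp.inner_apply, Fin.sum_univ_add, Pi.single_apply]

noncomputable def position : Fin k ⊕ Fin m × Fin m → EuclideanSpace ℝ (Fin (3 + k))
  | .inl r => apex r
  | .inr v => curvePoint k (param v.1 v.2)

theorem curveFunctional_position {q : ℝ[X]} (hq : q.natDegree ≤ 3) (v : Fin k ⊕ Fin m × Fin m) :
    curveFunctional k q (position v) = v.elim (fun _ => 0) fun w => q.eval (param w.1 w.2) := by
  rcases v with r | w
  · exact curveFunctional_apex q r
  · exact curveFunctional_curvePoint hq _

def edge (k : ℕ) (s t : Fin m) : Finset (Fin k ⊕ Fin m × Fin m) :=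
  univ.disjSum ({s, t} ×ˢ {s, t})

def hypergraph (k m : ℕ) : FinsetHypergraph (Fin k ⊕ Fin m × Fin m) :=
  ⟨(univ.filter fun p : Fin m × Fin m => p.1 < p.2).image fun p => edge k p.1 p.2⟩

theorem mem_edges {e : Finset (Fin k ⊕ Fin m × Fin m)} :
    e ∈ (hypergraph k m).edges ↔ ∃ s t, s < t ∧ edge k s t = e := by
  simp [hypergraph]

@[simp] theorem inl_mem_edge (r : Fin k) (s t : Fin m) : Sum.inl r ∈ edge k s t := by
  simp [edge]

@[simp] theorem inr_mem_edge {i j s t : Fin m} :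
    Sum.inr (i, j) ∈ edge k s t ↔ i ∈ ({s, t} : Finset _) ∧ j ∈ ({s, t} : Finset _) := by
  simp [edge]

theorem card_edge {s t : Fin m} (hst : s ≠ t) : (edge k s t).card = k + 4 := by
  simp [edge, card_disjSum, card_product, card_pair hst]

theorem affineIndependent_edge {s t : Fin m} (hst : s < t) :
    AffineIndependent ℝ fun v : edge k s t => position (v : Fin k ⊕ Fin m × Fin m) := by
  refine affineIndependent_of_forall_exists_affineMap fun ⟨v, hv⟩ => ?_
  rcases v with r | w
  · refine ⟨(EuclideanSpace.proj (Fin.natAdd 3 r) : _ →L[ℝ] ℝ).toLinearMap.toAffineMap, ?_, ?_⟩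
    · simp [position, apex]
    · rintro ⟨r' | w', hv'⟩ hne
      · simp_all [position, apex]
      · simp [position, curvePoint]
  · have hw : w ∈ ({s, t} : Finset _) ×ˢ {s, t} := by simpa [edge] using hv
    set P := (({s, t} : Finset _) ×ˢ {s, t}).erase w
    have hq : (∏ w' ∈ P, (X - C (param w'.1 w'.2))).natDegree ≤ 3 := by
      rw [natDegree_finsetProd_X_sub_C_eq_card, card_erase_of_mem hw, card_product,
        card_pair hst.ne]
    refine ⟨curveFunctional k (∏ w' ∈ P, (X - C (param w'.1 w'.2))), ?_, ?_⟩
    · simp only [curveFunctional_position hq, Sum.elim_inr, eval_prod, eval_sub, eval_X, eval_C]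
      refine prod_ne_zero_iff.2 fun w' hw' => sub_ne_zero.2 fun h => ?_
      exact ne_of_mem_erase hw' (param_injOn hst (mem_of_mem_erase hw') hw h.symm)
    · rintro ⟨r' | w', hv'⟩ hne
      · exact curveFunctional_apex _ r'
      · have hw' : w' ∈ P := mem_erase.2 ⟨by simpa using hne, by simpa [edge] using hv'⟩
        simp only [curveFunctional_position hq, Sum.elim_inr, eval_prod, eval_sub, eval_X, eval_C]
        exact prod_eq_zero hw' (sub_self _)

theorem finrank_direction_edge {s t : Fin m} (hst : s < t) :
    Module.finrank ℝ (affineSpan ℝ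
      (position '' (↑(edge k s t) : Set (Fin k ⊕ Fin m × Fin m)))).direction = 3 + k := by
  rw [direction_affineSpan, Set.image_eq_range]
  refine (affineIndependent_edge hst).finrank_vectorSpan ?_
  rw [Fintype.card_coe, card_edge hst.ne]
  omega

theorem convexHull_edge_inter {s t s' t' : Fin m} (hst : s < t) (hst' : s' < t') :
    convexHull ℝ (position '' (↑(edge k s t ∩ edge k s' t') : Set (Fin k ⊕ Fin m × Fin m))) =
      convexHull ℝ (position '' (↑(edge k s t) : Set (Fin k ⊕ Fin m × Fin m))) ∩
        convexHull ℝ (position '' (↑(edge k s' t') : Set (Fin k ⊕ Fin m × Fin m))) := by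
  by_cases hne : (s, t) = (s', t')
  · obtain ⟨rfl, rfl⟩ := Prod.ext_iff.1 hne
    rw [inter_self, Set.inter_self]
  obtain ⟨q, hq, hneg, hpos⟩ := exists_separates hst hst' hne
  rw [coe_inter]
  refine convexHull_image_inter_of_affineMap position (curveFunctional k q) ?_ ?_ ?_ <;>
    rintro (r | ⟨i, j⟩) hv <;> simp only [curveFunctional_position hq, Sum.elim_inl,
      Sum.elim_inr, mem_coe, inl_mem_edge, inr_mem_edge] at hv ⊢
  · exact le_rfl
  · rcases hneg i hv.1 j hv.2 with h | ⟨-, -, h⟩ <;> linarith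
  · exact le_rfl
  · rcases hpos i hv.1 j hv.2 with h | ⟨-, -, h⟩ <;> linarith
  · exact fun _ => trivial
  · intro h0
    rcases hneg i hv.1 j hv.2 with h | ⟨hi, hj, -⟩
    · exact absurd h0 h.ne
    · exact ⟨hi, hj⟩

theorem isUniform_hypergraph : (hypergraph k m).IsUniform (3 + k + 1) := by
  intro e he
  obtain ⟨s, t, hst, rfl⟩ := mem_edges.1 he
  rw [card_edge hst.ne]
  omega

theorem hasLinearEmbedding_hypergraph :
    (hypergraph k m).HasLinearEmbedding (3 + k + 1) (3 + k) := by
  refine ⟨position, fun e he => ?_, fun e₁ he₁ e₂ he₂ => ?_⟩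
  · obtain ⟨s, t, hst, rfl⟩ := mem_edges.1 he
    exact finrank_direction_edge hst
  · obtain ⟨s, t, hst, rfl⟩ := mem_edges.1 he₁
    obtain ⟨s', t', hst', rfl⟩ := mem_edges.1 he₂
    exact convexHull_edge_inter hst hst'

theorem exists_lt_mem_pair (hm : 2 ≤ m) (i j : Fin m) :
    ∃ s t : Fin m, s < t ∧ i ∈ ({s, t} : Finset _) ∧ j ∈ ({s, t} : Finset _) := by
  rcases lt_trichotomy i j with h | rfl | h
  · exact ⟨i, j, h, by simp, by simp⟩
  · have : Nontrivial (Fin m) := Fin.nontrivial_iff_two_le.2 hm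
    obtain ⟨l, hl⟩ := exists_ne i
    rcases hl.lt_or_gt with h | h
    · exact ⟨l, i, h, by simp, by simp⟩
    · exact ⟨i, l, h, by simp, by simp⟩
  · exact ⟨j, i, h, by simp, by simp⟩

theorem le_strongChromaticNumber_hypergraph (hm : 2 ≤ m) :
    k + m ≤ (hypergraph k m).strongChromaticNumber := by
  have hcover : ∀ v ∈ univ.disjSum (univ : Finset (Fin m)).diag,
      ∃ i : Fin m, ∀ s t : Fin m, i ∈ ({s, t} : Finset _) → v ∈ edge k s t := by
    rintro (r | ⟨i, j⟩) hv
    · exact ⟨⟨0, by omega⟩, fun s t _ => inl_mem_edge r s t⟩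
    · obtain rfl : i = j := by simpa using hv
      exact ⟨i, fun s t hi => inr_mem_edge.2 ⟨hi, hi⟩⟩
  have := FinsetHypergraph.card_le_strongChromaticNumber (H := hypergraph k m) _
    fun u hu v hv _ => by
      obtain ⟨i, hi⟩ := hcover u hu
      obtain ⟨j, hj⟩ := hcover v hv
      obtain ⟨s, t, hst, his, hjs⟩ := exists_lt_mem_pair hm i j
      exact ⟨edge k s t, mem_edges.2 ⟨s, t, hst, rfl⟩, hi s t his, hj s t hjs⟩
  simpa [card_disjSum, diag_card] using this

theorem exists_fin_hypergraph {n : ℕ} (hm : 2 ≤ m) (hn : k + m * m ≤ n) :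
    ∃ H : FinsetHypergraph (Fin n), H.IsUniform (3 + k + 1) ∧
      H.HasLinearEmbedding (3 + k + 1) (3 + k) ∧ k + m ≤ H.strongChromaticNumber := by
  let f : Fin k ⊕ Fin m × Fin m ↪ Fin n :=
    (Fintype.equivFin _).toEmbedding.trans (Fin.castLEEmb (by simpa using hn))
  exact ⟨(hypergraph k m).map f, isUniform_hypergraph.map f, hasLinearEmbedding_hypergraph.map f,
    (le_strongChromaticNumber_hypergraph hm).trans
      (FinsetHypergraph.strongChromaticNumber_le_map f)⟩

end MomentCurveHypergraph

/-- Corollary 3.6: `χˢ_{d,d+1}(n) ≥ ⌊√(n - d + 3)⌋ + d - 3` for `d ≥ 3`. -/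
theorem strong_lower_bound_d_dplus1 (d n : ℕ) (hd : 3 ≤ d) (hn : d + 1 ≤ n) :
    ∃ H : FinsetHypergraph (Fin n), H.IsUniform (d + 1) ∧ H.HasLinearEmbedding (d + 1) d ∧
      Nat.sqrt (n - d + 3) + d - 3 ≤ H.strongChromaticNumber := by
  obtain ⟨k, rfl⟩ := Nat.exists_eq_add_of_le hd
  have hm : 2 ≤ Nat.sqrt (n - (3 + k) + 3) := Nat.le_sqrt.2 (by omega)
  have hmm := Nat.sqrt_le (n - (3 + k) + 3)
  obtain ⟨H, hu, he, hχ⟩ :=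
    MomentCurveHypergraph.exists_fin_hypergraph hm (show k + _ * _ ≤ n by omega)
  exact ⟨H, hu, he, by omega⟩
end

section
/- Let ψ : ℝ → ℝ³ be the moment curve ψ(x) = (x, x², x³). For all real numbers a < b < c < d < e < f, the convex hull of {ψ(a), ψ(b), ψ(d)} and the convex hull of {ψ(c), ψ(e), ψ(f)} are disjoint. -/
/-!
The cubic `(t - c)(t - d)(t - e)` is an affine function `φ` of `momentCurve t`. At the vertices of
the first triangle it is negative except at `ψ(d)`, where it vanishes; at those of the second it is
positive except at `ψ(c)` and `ψ(e)`, where it vanishes. A common point `x` thus has `φ x = 0`,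
which forces `x = ψ(d)` and `x ∈ [ψ(c), ψ(e)]`. The quadratic `(t - c)(t - e)`, again affine in
`momentCurve t`, is nonnegative on that segment but negative at `d`.
-/

/-- The moment curve in `ℝ³`. -/
noncomputable def momentCurve (x : ℝ) : ℝ × ℝ × ℝ := (x, x ^ 2, x ^ 3)

section AffineFunctional

variable {E : Type*} [AddCommGroup E] [Module ℝ E] {φ : E →ᵃ[ℝ] ℝ} {s : Set E} {p x : E}

theorem AffineMap.nonneg_of_mem_convexHull (hs : ∀ y ∈ s, 0 ≤ φ y)
    (hx : x ∈ convexHull ℝ s) : 0 ≤ φ x :=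
  convexHull_min hs ((convex_Ici 0).affine_preimage φ) hx

theorem AffineMap.mem_convexHull_of_mem_convexHull_insert (hs : ∀ y ∈ s, 0 ≤ φ y)
    (hp : 0 < φ p) (hx : x ∈ convexHull ℝ (insert p s)) (hφx : φ x ≤ 0) :
    x ∈ convexHull ℝ s := by
  rcases s.eq_empty_or_nonempty with rfl | hne
  · rw [insert_empty_eq, convexHull_singleton, Set.mem_singleton_iff] at hx
    exact absurd (hx ▸ hφx) hp.not_ge
  rw [convexHull_insert hne, mem_convexJoin] at hx
  obtain ⟨p', rfl, y, hy, u, v, hu, hv, huv, rfl⟩ := hx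
  have hφy := φ.nonneg_of_mem_convexHull hs hy
  rw [Convex.combo_affine_apply huv, smul_eq_mul, smul_eq_mul] at hφx
  obtain rfl : u = 0 := by nlinarith [mul_nonneg hv hφy]
  obtain rfl : v = 1 := by linarith
  simpa using hy

end AffineFunctional

def momentCubic (k₀ k₁ k₂ k₃ : ℝ) : ℝ × ℝ × ℝ →ᵃ[ℝ] ℝ where
  toFun v := k₀ + k₁ * v.1 + k₂ * v.2.1 + k₃ * v.2.2
  linear := k₁ • LinearMap.fst ℝ ℝ (ℝ × ℝ)
    + k₂ • (LinearMap.fst ℝ ℝ ℝ ∘ₗ LinearMap.snd ℝ ℝ (ℝ × ℝ))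
    + k₃ • (LinearMap.snd ℝ ℝ ℝ ∘ₗ LinearMap.snd ℝ ℝ (ℝ × ℝ))
  map_vadd' v w := by simp; ring

theorem momentCubic_momentCurve (k₀ k₁ k₂ k₃ t : ℝ) :
    momentCubic k₀ k₁ k₂ k₃ (momentCurve t) = k₀ + k₁ * t + k₂ * t ^ 2 + k₃ * t ^ 3 :=
  rfl

theorem momentCurve_notMem_convexHull_pair {c d e : ℝ} (hcd : c < d) (hde : d < e) :
    momentCurve d ∉ convexHull ℝ {momentCurve c, momentCurve e} := by
  intro hd
  set χ := momentCubic (c * e) (-(c + e)) 1 0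
  have hχ (t : ℝ) : χ (momentCurve t) = (t - c) * (t - e) := by
    simp only [χ, momentCubic_momentCurve]; ring
  have := χ.nonneg_of_mem_convexHull (by simp [hχ]) hd
  rw [hχ] at this
  exact (mul_neg_of_pos_of_neg (sub_pos.2 hcd) (sub_neg.2 hde)).not_ge this

/-- Lemma 2.11 (key geometric claim): for `a < b < c < d < e < f` on the moment curve,
the triangles `{ψ(a), ψ(b), ψ(d)}` and `{ψ(c), ψ(e), ψ(f)}` are disjoint. -/
theorem momentCurve_interleaved_triangles_disjoint
    (a b c d e f : ℝ) (hab : a < b) (hbc : b < c) (hcd : c < d) (hde : d < e)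
    (hef : e < f) :
    convexHull ℝ ({momentCurve a, momentCurve b, momentCurve d} : Set (ℝ × ℝ × ℝ)) ∩
      convexHull ℝ ({momentCurve c, momentCurve e, momentCurve f} : Set (ℝ × ℝ × ℝ)) =
      ∅ := by
  rw [Set.eq_empty_iff_forall_notMem]
  rintro x ⟨hxA, hxB⟩
  set φ := momentCubic (-(c * d * e)) (c * d + c * e + d * e) (-(c + d + e)) 1
  have hφ (t : ℝ) : φ (momentCurve t) = (t - c) * (t - d) * (t - e) := by
    simp only [φ, momentCubic_momentCurve]; ring
  have hφa : φ (momentCurve a) < 0 := by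
    rw [hφ]
    exact mul_neg_of_pos_of_neg (mul_pos_of_neg_of_neg (by linarith) (by linarith)) (by linarith)
  have hφb : φ (momentCurve b) < 0 := by
    rw [hφ]
    exact mul_neg_of_pos_of_neg (mul_pos_of_neg_of_neg (by linarith) (by linarith)) (by linarith)
  have hφf : 0 < φ (momentCurve f) := by
    rw [hφ]
    exact mul_pos (mul_pos (by linarith) (by linarith)) (by linarith)
  obtain ⟨hφc, hφd, hφe⟩ :
      φ (momentCurve c) = 0 ∧ φ (momentCurve d) = 0 ∧ φ (momentCurve e) = 0 := by
    simp [hφ]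
  have hφx_nonpos : φ x ≤ 0 := by
    simpa using (-φ).nonneg_of_mem_convexHull (by simp [hφa.le, hφb.le, hφd]) hxA
  have hφx_nonneg : 0 ≤ φ x := φ.nonneg_of_mem_convexHull (by simp [hφc, hφe, hφf.le]) hxB
  have hx_ce : x ∈ convexHull ℝ {momentCurve c, momentCurve e} :=
    φ.mem_convexHull_of_mem_convexHull_insert (by simp [hφc, hφe]) hφf
      (by rwa [Set.insert_comm, Set.pair_comm (momentCurve f)]) hφx_nonpos
  have hx_bd := (-φ).mem_convexHull_of_mem_convexHull_insert (by simp [hφb.le, hφd])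
    (by simpa using hφa) hxA (by simpa using hφx_nonneg)
  have hx_d := (-φ).mem_convexHull_of_mem_convexHull_insert (by simp [hφd])
    (by simpa using hφb) hx_bd (by simpa using hφx_nonneg)
  rw [convexHull_singleton, Set.mem_singleton_iff] at hx_d
  exact momentCurve_notMem_convexHull_pair hcd hde (hx_d ▸ hx_ce)
end
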